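/- Under the setup of the previous characterization, if μ minimizes F over V, then μ' ∈ V is also a minimizer if and only if (a) A(μ' − μ) = 0 and (b) ⟨μ', A*(f − Aμ)⟩ = (λ/2)‖μ'‖_TV. -/

import Mathlib

open MeasureTheory Filter Topology Metric
open scoped RealInnerProductSpace ENNReal

/-- `ℝ^N` with the Euclidean norm. -/
abbrev EucN (N : ℕ) := EuclideanSpace ℝ (Fin N)

/-- An `ℝ^N`-valued finite signed Borel measure, represented by its `N`
components, each a finite signed measure. -/
abbrev VM (α : Type) [MeasurableSpace α] (N : ℕ) := Fin N → MeasureTheory.SignedMeasure α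

namespace VM

variable {α : Type} [MeasurableSpace α] {N : ℕ}

/-- A dominating positive measure for all components of `μ`. -/
noncomputable def base (μ : VM α N) : Measure α := ∑ i, (μ i).totalVariation

/-- The vector density (Radon–Nikodym derivative) of `μ` with respect to `μ.base`. -/
noncomputable def dens (μ : VM α N) (x : α) : EucN N := WithLp.toLp 2 (fun i => (μ i).rnDeriv μ.base x)

/-- The total variation measure `|μ|` of the vector measure `μ`. -/
noncomputable def var (μ : VM α N) : Measure α := μ.base.withDensity (fun x => ‖μ.dens x‖₊)

/-- The total variation norm `‖μ‖_TV = |μ|(S)`. -/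
noncomputable def tv (μ : VM α N) : ℝ := (μ.var Set.univ).toReal

/-- The value `μ(E) ∈ ℝ^N` of the vector measure on a set `E`. -/
noncomputable def val (μ : VM α N) (E : Set α) : EucN N := WithLp.toLp 2 (fun i => μ i E)

/-- The pairing `⟨φ, μ⟩ = ∫ φ · dμ`. -/
noncomputable def pair (μ : VM α N) (φ : α → EucN N) : ℝ :=
  ∫ x, ⟪φ x, μ.dens x⟫ ∂(μ.base)

end VM

/-- The regularized criterion `𝓕_{λ,f}(μ) = ‖f − Aμ‖² + λ‖μ‖_TV`. -/
noncomputable def Gcrit {M N : ℕ} {S : Set (EucN M)} {H : Type}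
    [NormedAddCommGroup H] [InnerProductSpace ℝ H]
    (A : VM S N →ₗ[ℝ] H) (f : H) (l : ℝ) (μ : VM S N) : ℝ :=
  ‖f - A μ‖ ^ 2 + l * μ.tv



section AuxTV

namespace VM

variable {α : Type} [MeasurableSpace α] {N : ℕ}

/-- The density of `μ` with respect to an arbitrary dominating measure. -/
noncomputable def densWrt (μ : VM α N) (ρ : Measure α) (x : α) : EucN N :=
  WithLp.toLp 2 (fun i => (μ i).rnDeriv ρ x)

lemma posPart_absCont (s : MeasureTheory.SignedMeasure α) :
    s.toJordanDecomposition.posPart ≪ s.totalVariation := by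
  intro A hA
  rw [MeasureTheory.SignedMeasure.totalVariation, Measure.add_apply, add_eq_zero] at hA
  exact hA.1

lemma negPart_absCont (s : MeasureTheory.SignedMeasure α) :
    s.toJordanDecomposition.negPart ≪ s.totalVariation := by
  intro A hA
  rw [MeasureTheory.SignedMeasure.totalVariation, Measure.add_apply, add_eq_zero] at hA
  exact hA.2

lemma tv_ac_iff (s : MeasureTheory.SignedMeasure α) (ρ : Measure α) :
    s.totalVariation ≪ ρ ↔ s ≪ᵥ ρ.toENNRealVectorMeasure := by
  rw [MeasureTheory.SignedMeasure.absolutelyContinuous_ennreal_iff,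
    MeasureTheory.VectorMeasure.ennrealToMeasure_toENNRealVectorMeasure]

instance instIsFiniteTV (s : MeasureTheory.SignedMeasure α) :
    IsFiniteMeasure s.totalVariation := by
  rw [MeasureTheory.SignedMeasure.totalVariation]
  infer_instance

instance instIsFiniteBase (μ : VM α N) : IsFiniteMeasure μ.base := by
  refine ⟨?_⟩
  rw [VM.base, Measure.finset_sum_apply]
  exact ENNReal.sum_lt_top.2 fun i _ => measure_lt_top _ _

lemma totalVariation_absCont_base (μ : VM α N) (i : Fin N) :
    (μ i).totalVariation ≪ μ.base := by
  intro s hs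
  rw [VM.base, Measure.finset_sum_apply] at hs
  exact (Finset.sum_eq_zero_iff.1 hs) i (Finset.mem_univ i)

lemma measurable_densWrt (μ : VM α N) (ρ : Measure α) : Measurable (μ.densWrt ρ) :=
  (WithLp.measurable_toLp 2 _).comp (measurable_pi_lambda _ fun _ => MeasureTheory.SignedMeasure.measurable_rnDeriv _ _)

lemma measurable_nnnorm_densWrt (μ : VM α N) (ρ : Measure α) :
    Measurable (fun x => (‖μ.densWrt ρ x‖₊ : ℝ≥0∞)) :=
  (μ.measurable_densWrt ρ).nnnorm.coe_nnreal_ennreal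

lemma var_univ_eq_lintegral (μ : VM α N) :
    μ.var Set.univ = ∫⁻ x, (‖μ.densWrt μ.base x‖₊ : ℝ≥0∞) ∂μ.base := by
  rw [VM.var, MeasureTheory.withDensity_apply _ MeasurableSet.univ,
    MeasureTheory.setLIntegral_univ]
  rfl

/-- Key representation lemma: the total variation can be computed with respect to any
finite dominating measure. -/
lemma var_univ_eq (μ : VM α N) (ρ : Measure α) [IsFiniteMeasure ρ]
    (h : ∀ i, (μ i).totalVariation ≪ ρ) :
    μ.var Set.univ = ∫⁻ x, (‖μ.densWrt ρ x‖₊ : ℝ≥0∞) ∂ρ := by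
  have hbρ : μ.base ≪ ρ := by
    intro s hs
    rw [VM.base, Measure.finset_sum_apply]
    exact Finset.sum_eq_zero fun i _ => h i hs
  set g : α → ℝ≥0∞ := μ.base.rnDeriv ρ with hg
  have hposneg : ∀ i : Fin N, ∀ᵐ x ∂ρ,
      (μ i).rnDeriv ρ x = (g x).toReal * (μ i).rnDeriv μ.base x := by
    intro i
    have hp : (μ i).toJordanDecomposition.posPart ≪ μ.base :=
      (posPart_absCont (μ i)).trans (μ.totalVariation_absCont_base i)
    have hn : (μ i).toJordanDecomposition.negPart ≪ μ.base :=
      (negPart_absCont (μ i)).trans (μ.totalVariation_absCont_base i)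
    filter_upwards [Measure.rnDeriv_mul_rnDeriv (κ := ρ) hp,
      Measure.rnDeriv_mul_rnDeriv (κ := ρ) hn] with x hx1 hx2
    rw [MeasureTheory.SignedMeasure.rnDeriv, MeasureTheory.SignedMeasure.rnDeriv,
      ← hx1, ← hx2]
    simp only [Pi.mul_apply, ENNReal.toReal_mul]
    ring
  have hchain : ∀ᵐ x ∂ρ, μ.densWrt ρ x = (g x).toReal • μ.densWrt μ.base x := by
    filter_upwards [MeasureTheory.ae_all_iff.2 hposneg] with x hx
    ext i
    simpa [VM.densWrt] using hx i
  have hgfin : ∀ᵐ x ∂ρ, g x ≠ ∞ := by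
    filter_upwards [Measure.rnDeriv_lt_top μ.base ρ] with x hx using hx.ne
  have hstep : ∫⁻ x, (‖μ.densWrt ρ x‖₊ : ℝ≥0∞) ∂ρ
      = ∫⁻ x, g x * (‖μ.densWrt μ.base x‖₊ : ℝ≥0∞) ∂ρ := by
    refine lintegral_congr_ae ?_
    filter_upwards [hchain, hgfin] with x hx hxf
    rw [hx, nnnorm_smul, ENNReal.coe_mul,
      ← enorm_eq_nnnorm, Real.enorm_eq_ofReal ENNReal.toReal_nonneg, ENNReal.ofReal_toReal hxf]
  have hwd := lintegral_withDensity_eq_lintegral_mul ρ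
    (Measure.measurable_rnDeriv μ.base ρ) (μ.measurable_nnnorm_densWrt μ.base)
  simp only [Pi.mul_apply] at hwd
  rw [Measure.withDensity_rnDeriv_eq _ _ hbρ] at hwd
  rw [hstep, var_univ_eq_lintegral]
  exact hwd

lemma nnnorm_le_sum (v : EucN N) : (‖v‖₊ : ℝ≥0∞) ≤ ∑ i, (‖v i‖₊ : ℝ≥0∞) := by
  have h1 : ‖v‖ ≤ ∑ i, ‖v i‖ := by
    rw [EuclideanSpace.norm_eq]
    have h2 : ∑ i, ‖v i‖ ^ 2 ≤ (∑ i, ‖v i‖) ^ 2 :=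
      Finset.sum_sq_le_sq_sum_of_nonneg (fun i _ => norm_nonneg _)
    calc Real.sqrt (∑ i, ‖v i‖ ^ 2) ≤ Real.sqrt ((∑ i, ‖v i‖) ^ 2) := Real.sqrt_le_sqrt h2
      _ = ∑ i, ‖v i‖ := Real.sqrt_sq (Finset.sum_nonneg fun i _ => norm_nonneg _)
  calc (‖v‖₊ : ℝ≥0∞) = ENNReal.ofReal ‖v‖ := (ofReal_norm v).symm
    _ ≤ ENNReal.ofReal (∑ i, ‖v i‖) := ENNReal.ofReal_le_ofReal h1
    _ = ∑ i, ENNReal.ofReal ‖v i‖ := ENNReal.ofReal_sum_of_nonneg fun i _ => norm_nonneg _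
    _ = ∑ i, (‖v i‖₊ : ℝ≥0∞) :=
        Finset.sum_congr rfl fun i _ => ofReal_norm (v i)

lemma var_univ_lt_top (μ : VM α N) : μ.var Set.univ < ∞ := by
  rw [var_univ_eq_lintegral]
  calc ∫⁻ x, (‖μ.densWrt μ.base x‖₊ : ℝ≥0∞) ∂μ.base
      ≤ ∫⁻ x, ∑ i, (‖μ.densWrt μ.base x i‖₊ : ℝ≥0∞) ∂μ.base :=
        lintegral_mono fun x => nnnorm_le_sum _
    _ = ∑ i, ∫⁻ x, (‖μ.densWrt μ.base x i‖₊ : ℝ≥0∞) ∂μ.base := by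
        refine lintegral_finset_sum _ fun i _ => ?_
        exact (MeasureTheory.SignedMeasure.measurable_rnDeriv _ _).enorm
    _ < ∞ := by
        refine ENNReal.sum_lt_top.2 fun i _ => ?_
        exact hasFiniteIntegral_iff_enorm.1 (MeasureTheory.SignedMeasure.integrable_rnDeriv (μ i) μ.base).2

lemma tv_nonneg (μ : VM α N) : 0 ≤ μ.tv := ENNReal.toReal_nonneg

lemma tv_smul (c : ℝ) (μ : VM α N) : (c • μ).tv = |c| * μ.tv := by
  have habs : ∀ i, ((c • μ) i).totalVariation ≪ μ.base := by
    intro i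
    rw [show (c • μ) i = c • μ i from rfl, tv_ac_iff]
    intro A hA
    have h0 : μ i A = 0 := ((tv_ac_iff (μ i) μ.base).1 (μ.totalVariation_absCont_base i)) hA
    rw [MeasureTheory.VectorMeasure.smul_apply, h0, smul_zero]
  have h1 := (c • μ).var_univ_eq μ.base habs
  have h2 : ∀ᵐ x ∂μ.base,
      (‖(c • μ).densWrt μ.base x‖₊ : ℝ≥0∞)
        = (‖c‖₊ : ℝ≥0∞) * ‖μ.densWrt μ.base x‖₊ := by
    have hall : ∀ᵐ x ∂μ.base, ∀ i : Fin N,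
        (c • μ i).rnDeriv μ.base x = c * (μ i).rnDeriv μ.base x := by
      refine MeasureTheory.ae_all_iff.2 fun i => ?_
      filter_upwards [MeasureTheory.SignedMeasure.rnDeriv_smul (μ i) μ.base c] with x hx
      simpa using hx
    filter_upwards [hall] with x hx
    have hd : (c • μ).densWrt μ.base x = c • μ.densWrt μ.base x := by
      ext i
      simpa [VM.densWrt] using hx i
    rw [hd, nnnorm_smul, ENNReal.coe_mul]
  rw [lintegral_congr_ae h2,
    lintegral_const_mul _ (μ.measurable_nnnorm_densWrt μ.base)] at h1
  rw [VM.tv, VM.tv, h1, ← var_univ_eq_lintegral, ENNReal.toReal_mul]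
  congr 1

lemma tv_add_le (μ ν : VM α N) : (μ + ν).tv ≤ μ.tv + ν.tv := by
  set ρ : Measure α := μ.base + ν.base with hρ
  have hbl : μ.base ≪ ρ := by
    intro s hs
    rw [hρ, Measure.add_apply, add_eq_zero] at hs
    exact hs.1
  have hbr : ν.base ≪ ρ := by
    intro s hs
    rw [hρ, Measure.add_apply, add_eq_zero] at hs
    exact hs.2
  have hμρ : ∀ i, (μ i).totalVariation ≪ ρ := fun i =>
    (μ.totalVariation_absCont_base i).trans hbl
  have hνρ : ∀ i, (ν i).totalVariation ≪ ρ := fun i =>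
    (ν.totalVariation_absCont_base i).trans hbr
  have habs : ∀ i, ((μ + ν) i).totalVariation ≪ ρ := by
    intro i
    rw [show (μ + ν) i = μ i + ν i from rfl, tv_ac_iff]
    intro A hA
    have h0 : μ i A = 0 := ((tv_ac_iff (μ i) ρ).1 (hμρ i)) hA
    have h0' : ν i A = 0 := ((tv_ac_iff (ν i) ρ).1 (hνρ i)) hA
    rw [MeasureTheory.VectorMeasure.add_apply, h0, h0', add_zero]
  have hsum := (μ + ν).var_univ_eq ρ habs
  have hdens : ∀ᵐ x ∂ρ,
      (μ + ν).densWrt ρ x = μ.densWrt ρ x + ν.densWrt ρ x := by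
    have hall : ∀ᵐ x ∂ρ, ∀ i : Fin N,
        (μ i + ν i).rnDeriv ρ x = (μ i).rnDeriv ρ x + (ν i).rnDeriv ρ x := by
      refine MeasureTheory.ae_all_iff.2 fun i => ?_
      filter_upwards [MeasureTheory.SignedMeasure.rnDeriv_add (μ i) (ν i) ρ] with x hx
      simpa using hx
    filter_upwards [hall] with x hx
    ext i
    simpa [VM.densWrt] using hx i
  have hle : (μ + ν).var Set.univ ≤ μ.var Set.univ + ν.var Set.univ := by
    rw [hsum, μ.var_univ_eq ρ hμρ, ν.var_univ_eq ρ hνρ,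
      ← lintegral_add_left (μ.measurable_nnnorm_densWrt ρ)]
    refine lintegral_mono_ae ?_
    filter_upwards [hdens] with x hx
    rw [hx]
    exact_mod_cast nnnorm_add_le (μ.densWrt ρ x) (ν.densWrt ρ x)
  rw [VM.tv, VM.tv, VM.tv, ← ENNReal.toReal_add μ.var_univ_lt_top.ne ν.var_univ_lt_top.ne]
  exact ENNReal.toReal_mono
    (ENNReal.add_ne_top.2 ⟨μ.var_univ_lt_top.ne, ν.var_univ_lt_top.ne⟩) hle

end VM

end AuxTV

section AuxOpt

private lemma minimizer_inner_eq {M N : ℕ} {S : Set (EucN M)} {H : Type}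
    [NormedAddCommGroup H] [InnerProductSpace ℝ H]
    (A : VM S N →ₗ[ℝ] H) (V : Submodule ℝ (VM S N)) (l : ℝ) (hl : 0 < l) (f : H)
    (θ : VM S N) (hθV : θ ∈ V) (hmin : ∀ ν ∈ V, Gcrit A f l θ ≤ Gcrit A f l ν) :
    ⟪A θ, f - A θ⟫ = l / 2 * θ.tv := by
  set b := ⟪A θ, f - A θ⟫ with hbdef
  set K := ‖A θ‖ ^ 2 with hKdef
  set T := θ.tv with hTdef
  have hKnn : 0 ≤ K := sq_nonneg _
  have hTnn : 0 ≤ T := θ.tv_nonneg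
  have key : ∀ t : ℝ, -1 ≤ t → t ≤ 1 → 0 ≤ t * (l * T - 2 * b) + t ^ 2 * K := by
    intro t ht1 ht2
    have hmem : (1 + t) • θ ∈ V := V.smul_mem _ hθV
    have h := hmin _ hmem
    have htv : ((1 + t) • θ).tv = (1 + t) * T := by
      rw [VM.tv_smul, abs_of_nonneg (by linarith)]
    have hA : A ((1 + t) • θ) = (1 + t) • A θ := A.map_smul _ _
    have hsub : f - A ((1 + t) • θ) = (f - A θ) - t • A θ := by
      rw [hA, add_smul, one_smul]; abel
    have hnorm : ‖f - A ((1 + t) • θ)‖ ^ 2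
        = ‖f - A θ‖ ^ 2 - 2 * (t * b) + t ^ 2 * K := by
      rw [hsub, norm_sub_sq_real, real_inner_smul_right, norm_smul,
        real_inner_comm, ← hbdef, mul_pow, hKdef, Real.norm_eq_abs, sq_abs]
    simp only [Gcrit] at h
    rw [htv, hnorm] at h
    nlinarith [h]
  have hb : l * T - 2 * b = 0 := by
    by_contra hc
    set c := l * T - 2 * b with hcdef
    have hc' : 0 < |c| := abs_pos.mpr hc
    set ε := min 1 (|c| / (2 * (K + 1))) with hεdef
    have hε0 : 0 < ε := lt_min one_pos (by positivity)
    have hε1 : ε ≤ 1 := min_le_left _ _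
    have h1 := key ε (by linarith) hε1
    have h2 := key (-ε) (by linarith) (by linarith)
    have h3 : |c| ≤ ε * K := by
      rcases abs_cases c with ⟨hc1, _⟩ | ⟨hc1, _⟩ <;> nlinarith
    have h4 : ε ≤ |c| / (2 * (K + 1)) := min_le_right _ _
    have h5 : ε * K ≤ |c| / (2 * (K + 1)) * K := by
      exact mul_le_mul_of_nonneg_right h4 hKnn
    have h6 : |c| / (2 * (K + 1)) * K < |c| := by
      rw [div_mul_eq_mul_div, div_lt_iff₀ (by positivity)]
      nlinarith
    linarith
  linarith

end AuxOpt

set_option maxHeartbeats 2000000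

/-- If `μ` minimizes `F` over a TV-closed subspace `V`, then `μ' ∈ V` is also a
minimizer iff `A(μ' − μ) = 0` and `⟨μ', A*(f − Aμ)⟩ = (λ/2)‖μ'‖_TV`. -/
theorem stmt9 {M N : ℕ} (S : Set (EucN M)) (hS : IsCompact S)
    {H : Type} [NormedAddCommGroup H] [InnerProductSpace ℝ H] [CompleteSpace H]
    (A : VM S N →ₗ[ℝ] H) (Astar : H → C(S, EucN N))
    (hadj : ∀ (μ : VM S N) (g : H), ⟪A μ, g⟫ = μ.pair (Astar g))
    (V : Submodule ℝ (VM S N))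
    (hVcl : ∀ (μk : ℕ → VM S N) (μ₀ : VM S N), (∀ k, μk k ∈ V) →
      Tendsto (fun k => (μk k - μ₀).tv) atTop (𝓝 0) → μ₀ ∈ V)
    (l : ℝ) (hl : 0 < l) (f : H)
    (μ : VM S N) (hμV : μ ∈ V) (hmin : ∀ ν ∈ V, Gcrit A f l μ ≤ Gcrit A f l ν)
    (μ' : VM S N) (hμ'V : μ' ∈ V) :
    (∀ ν ∈ V, Gcrit A f l μ' ≤ Gcrit A f l ν) ↔
      (A (μ' - μ) = 0 ∧ VM.pair μ' (Astar (f - A μ)) = l / 2 * μ'.tv) := by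
  have hkeyμ : ⟪A μ, f - A μ⟫ = l / 2 * μ.tv := minimizer_inner_eq A V l hl f μ hμV hmin
  constructor
  · intro hmin'
    have hkeyμ' : ⟪A μ', f - A μ'⟫ = l / 2 * μ'.tv :=
      minimizer_inner_eq A V l hl f μ' hμ'V hmin'
    have hGeq : Gcrit A f l μ' = Gcrit A f l μ :=
      le_antisymm (hmin' μ hμV) (hmin μ' hμ'V)
    have hABeq : A μ' = A μ := by
      set ν := ((1:ℝ)/2) • (μ + μ') with hν
      have hνV : ν ∈ V := V.smul_mem _ (V.add_mem hμV hμ'V)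
      have h1 := hmin ν hνV
      have htv : ν.tv ≤ (1/2) * (μ.tv + μ'.tv) := by
        rw [hν, VM.tv_smul, abs_of_nonneg (by norm_num : (0:ℝ) ≤ 1/2)]
        nlinarith [VM.tv_add_le μ μ']
      have hAν : f - A ν = ((1:ℝ)/2) • ((f - A μ) + (f - A μ')) := by
        rw [hν, A.map_smul, A.map_add]
        module
      have hpar := parallelogram_law_with_norm ℝ (f - A μ) (f - A μ')
      have hdiff : (f - A μ) - (f - A μ') = A μ' - A μ := by abel
      have hnormν : ‖f - A ν‖ ^ 2
          = (1/4) * (2 * (‖f - A μ‖ ^ 2 + ‖f - A μ'‖ ^ 2) - ‖A μ' - A μ‖ ^ 2) := by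
        rw [hAν, norm_smul, mul_pow, Real.norm_eq_abs, sq_abs]
        rw [hdiff] at hpar
        nlinarith [hpar]
      have hd : ‖A μ' - A μ‖ ^ 2 ≤ 0 := by
        simp only [Gcrit] at h1 hGeq
        rw [hnormν] at h1
        nlinarith [htv, h1, hGeq]
      have : A μ' - A μ = 0 := by
        have := le_antisymm hd (sq_nonneg _)
        have h0 : ‖A μ' - A μ‖ = 0 := by
          nlinarith [norm_nonneg (A μ' - A μ)]
        exact norm_eq_zero.mp h0
      exact sub_eq_zero.mp this
    refine ⟨by rw [A.map_sub, hABeq, sub_self], ?_⟩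
    rw [← hadj]
    calc ⟪A μ', f - A μ⟫ = ⟪A μ', f - A μ'⟫ := by rw [hABeq]
      _ = l / 2 * μ'.tv := hkeyμ'
  · rintro ⟨ha, hb⟩
    have hABeq : A μ' = A μ := by rwa [A.map_sub, sub_eq_zero] at ha
    have h1 : ⟪A μ', f - A μ⟫ = l / 2 * μ'.tv := by rw [hadj]; exact hb
    have h2 : ⟪A μ', f - A μ⟫ = l / 2 * μ.tv := by rw [hABeq]; exact hkeyμ
    have htveq : μ'.tv = μ.tv := by
      have h3 : l / 2 * μ'.tv = l / 2 * μ.tv := h1 ▸ h2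
      have hl2 : l / 2 ≠ 0 := by positivity
      exact mul_left_cancel₀ hl2 h3
    intro ν hν
    have hG : Gcrit A f l μ' = Gcrit A f l μ := by
      simp only [Gcrit]
      rw [hABeq, htveq]
    rw [hG]
    exact hmin ν hν
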